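/- arXiv:1904.10437 — 2 statements merged into one kernel-verified Lean document; each statement's English description precedes it below -/
import Mathlib

section
/- For a Hermitian matrix X and a positive definite matrix σ, the operator norm ‖σ^{-1/2} X σ^{-1/2}‖_∞ equals the infimum of all λ ≥ 0 such that -λσ ≤ X ≤ λσ in the Loewner order. -/
open scoped Classical
open Matrix ComplexOrder

noncomputable section

variable {n : Type*} [Fintype n] [DecidableEq n]

/-- Real power of a (Hermitian) matrix via the continuous functional calculus. -/
noncomputable def mpow (A : Matrix n n ℂ) (r : ℝ) : Matrix n n ℂ :=
  cfc (fun x : ℝ => x ^ r) A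

/-- Schatten `p`-norm `(Tr[(Y†Y)^(p/2)])^(1/p)`. -/
noncomputable def schattenNorm (p : ℝ) (Y : Matrix n n ℂ) : ℝ :=
  ((mpow (Yᴴ * Y) (p / 2)).trace).re ^ (1 / p)

/-- `μ_α(X‖σ) = ‖σ^{(1-α)/(2α)} X σ^{(1-α)/(2α)}‖_α`. -/
noncomputable def muAlpha (α : ℝ) (X σ : Matrix n n ℂ) : ℝ :=
  schattenNorm α (mpow σ ((1 - α) / (2 * α)) * X * mpow σ ((1 - α) / (2 * α)))

/-- Operator norm (Schatten `∞`-norm) of a matrix. -/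
noncomputable def opNorm (Y : Matrix n n ℂ) : ℝ :=
  ‖Matrix.toEuclideanCLM (𝕜 := ℂ) Y‖

/-! Conjugation by the invertible Hermitian matrix `σ^{-1/2}` preserves the Loewner order and
sends `σ` to `1`, so `-λσ ≤ X ≤ λσ` becomes `-λ ≤ Y ≤ λ` for `Y = σ^{-1/2} X σ^{-1/2}`. In the
C⋆-algebra of matrices with the operator norm, `-λ ≤ Y ≤ λ` says that the spectrum of the
self-adjoint `Y` lies in `[-λ, λ]`, and since `‖Y‖` or `-‖Y‖` belongs to that spectrum this holds
exactly when `‖Y‖ ≤ λ`. The admissible `λ` thus form the interval `[‖Y‖, ∞)`. -/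

lemma IsUnit.star_left_conjugate_le_conjugate_iff {R : Type*} [Ring R] [PartialOrder R]
    [StarRing R] [StarOrderedRing R] {u a b : R} (hu : IsUnit u) :
    star u * a * u ≤ star u * b * u ↔ a ≤ b := by
  rw [← sub_nonneg, ← mul_sub_right_distrib, ← mul_sub_left_distrib,
    hu.star_left_conjugate_nonneg_iff, sub_nonneg]

section CStarAlgebra

variable {A : Type*} [CStarAlgebra A] [PartialOrder A] [StarOrderedRing A]

lemma IsSelfAdjoint.norm_le_iff_mem_Icc {a : A} (ha : IsSelfAdjoint a) {r : ℝ} (hr : 0 ≤ r) :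
    ‖a‖ ≤ r ↔ a ∈ Set.Icc (-algebraMap ℝ A r) (algebraMap ℝ A r) := by
  refine ⟨fun h ↦ ⟨?_, ?_⟩, fun ⟨hlow, hup⟩ ↦ ?_⟩
  · exact (neg_le_neg (algebraMap_mono A h)).trans ha.neg_algebraMap_norm_le_self
  · exact ha.le_algebraMap_norm_self.trans (algebraMap_mono A h)
  rcases subsingleton_or_nontrivial A with hA | hA
  · rwa [Subsingleton.elim a 0, norm_zero]
  rw [← map_neg] at hlow
  have hspec_le := (le_algebraMap_iff_spectrum_le ha).mp hup
  have hspec_ge := (algebraMap_le_iff_le_spectrum ha).mp hlow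
  rcases CStarAlgebra.norm_or_neg_norm_mem_spectrum ha with h | h
  · exact hspec_le _ h
  · linarith [hspec_ge _ h]

lemma IsSelfAdjoint.norm_eq_sInf {a : A} (ha : IsSelfAdjoint a) :
    ‖a‖ = sInf {r : ℝ | 0 ≤ r ∧ -algebraMap ℝ A r ≤ a ∧ a ≤ algebraMap ℝ A r} := by
  have hset : {r : ℝ | 0 ≤ r ∧ -algebraMap ℝ A r ≤ a ∧ a ≤ algebraMap ℝ A r} = Set.Ici ‖a‖ := by
    ext r
    refine ⟨fun ⟨hr, hmem⟩ ↦ (ha.norm_le_iff_mem_Icc hr).mpr hmem, fun h ↦ ?_⟩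
    have hr : 0 ≤ r := (norm_nonneg a).trans h
    exact ⟨hr, (ha.norm_le_iff_mem_Icc hr).mp h⟩
  rw [hset, csInf_Ici]

lemma IsSelfAdjoint.norm_star_conjugate_eq_sInf {a s u : A} (ha : IsSelfAdjoint a)
    (hu : IsUnit u) (hsu : star u * s * u = 1) :
    ‖star u * a * u‖ = sInf {r : ℝ | 0 ≤ r ∧ -(r • s) ≤ a ∧ a ≤ r • s} := by
  have hr (r : ℝ) : algebraMap ℝ A r = star u * (r • s) * u := by
    rw [Algebra.algebraMap_eq_smul_one, mul_smul_comm, smul_mul_assoc, hsu]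
  have hneg (r : ℝ) : -algebraMap ℝ A r = star u * -(r • s) * u := by
    rw [hr, mul_neg, neg_mul]
  rw [(ha.conjugate' u).norm_eq_sInf]
  simp only [hneg]
  simp only [hr, hu.star_left_conjugate_le_conjugate_iff]

end CStarAlgebra

section Loewner

open scoped Matrix.Norms.L2Operator MatrixOrder

lemma Matrix.IsHermitian.opNorm_conjugate_eq_sInf {X S σ : Matrix n n ℂ} (hX : X.IsHermitian)
    (hS : S.IsHermitian) (hSunit : IsUnit S) (hSσS : S * σ * S = 1) :
    opNorm (S * X * S) =
      sInf {lam : ℝ | 0 ≤ lam ∧ (X + lam • σ).PosSemidef ∧ (lam • σ - X).PosSemidef} := by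
  have hS' : star S = S := hS.isSelfAdjoint.star_eq
  have key := hX.isSelfAdjoint.norm_star_conjugate_eq_sInf hSunit (by rwa [hS'])
  rw [hS'] at key
  rw [opNorm, ← Matrix.cstar_norm_def]
  simpa only [Matrix.le_iff, sub_neg_eq_add] using key

end Loewner

lemma Matrix.continuousOn_spectrum_real (A : Matrix n n ℂ) (f : ℝ → ℝ) :
    ContinuousOn f (spectrum ℝ A) := by
  rw [continuousOn_iff_continuous_domRestrict]
  exact continuous_of_discreteTopology

lemma mpow_isHermitian (A : Matrix n n ℂ) (r : ℝ) : (mpow A r).IsHermitian :=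
  cfc_predicate (fun x : ℝ => x ^ r) A

lemma mpow_zero {A : Matrix n n ℂ} (hA : A.IsHermitian) : mpow A 0 = 1 := by
  rw [mpow, cfc_congr fun x _ ↦ Real.rpow_zero x, cfc_const_one ℝ A]

lemma mpow_one {A : Matrix n n ℂ} (hA : A.IsHermitian) : mpow A 1 = A := by
  rw [mpow, cfc_congr fun x _ ↦ Real.rpow_one x, cfc_id' ℝ A]

lemma Matrix.PosDef.spectrum_real_pos {A : Matrix n n ℂ} (hA : A.PosDef) :
    ∀ x ∈ spectrum ℝ A, 0 < x := by
  rw [hA.isHermitian.spectrum_real_eq_range_eigenvalues]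
  rintro _ ⟨i, rfl⟩
  exact hA.eigenvalues_pos i

lemma Matrix.PosDef.mpow_mul_mpow {A : Matrix n n ℂ} (hA : A.PosDef) (r s : ℝ) :
    mpow A r * mpow A s = mpow A (r + s) := by
  rw [mpow, mpow, mpow, ← cfc_mul _ _ A (A.continuousOn_spectrum_real _)
    (A.continuousOn_spectrum_real _)]
  exact cfc_congr fun x hx ↦ (Real.rpow_add (hA.spectrum_real_pos x hx) r s).symm

lemma Matrix.PosDef.isUnit_mpow {A : Matrix n n ℂ} (hA : A.PosDef) (r : ℝ) :
    IsUnit (mpow A r) :=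
  (isUnit_cfc_iff _ A (A.continuousOn_spectrum_real _) hA.isHermitian).mpr
    fun x hx ↦ (Real.rpow_pos_of_pos (hA.spectrum_real_pos x hx) r).ne'

lemma Matrix.PosDef.mpow_neg_half_mul_self_mul_mpow_neg_half {A : Matrix n n ℂ} (hA : A.PosDef) :
    mpow A (-(1 / 2 : ℝ)) * A * mpow A (-(1 / 2 : ℝ)) = 1 := by
  calc mpow A (-(1 / 2 : ℝ)) * A * mpow A (-(1 / 2 : ℝ))
      = mpow A (-(1 / 2 : ℝ)) * mpow A 1 * mpow A (-(1 / 2 : ℝ)) := by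
        rw [mpow_one hA.isHermitian]
    _ = mpow A 0 := by rw [hA.mpow_mul_mpow, hA.mpow_mul_mpow]; norm_num
    _ = 1 := mpow_zero hA.isHermitian

/-- `‖σ^{-1/2} X σ^{-1/2}‖_∞ = inf {λ ≥ 0 : -λσ ≤ X ≤ λσ}` (Loewner order). -/
theorem opNorm_eq_sInf_loewner {d : ℕ}
    (X σ : Matrix (Fin d) (Fin d) ℂ) (hX : X.IsHermitian) (hσ : σ.PosDef) :
    opNorm (mpow σ (-(1 / 2 : ℝ)) * X * mpow σ (-(1 / 2 : ℝ))) =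
      sInf {lam : ℝ | 0 ≤ lam ∧ (X + lam • σ).PosSemidef ∧ (lam • σ - X).PosSemidef} :=
  hX.opNorm_conjugate_eq_sInf (mpow_isHermitian σ _) (hσ.isUnit_mpow _)
    hσ.mpow_neg_half_mul_self_mul_mpow_neg_half

end
end

section
/- The α-logarithmic negativity is faithful: for every bipartite state ρ_AB and α ≥ 1, E_N^α(ρ_AB) ≥ 0, and E_N^α(ρ_AB) = 0 if and only if ρ_AB is a PPT state. -/
open scoped Classical
open Matrix ComplexOrder

noncomputable section

variable {n : Type*} [Fintype n] [DecidableEq n]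

/-- Partial transpose on the second tensor factor. -/
def ptranspose {a b : Type*} (ρ : Matrix (a × b) (a × b) ℂ) : Matrix (a × b) (a × b) ℂ :=
  fun x y => ρ (x.1, y.2) (y.1, x.2)

/-- PPT states: positive semidefinite, positive partial transpose, unit trace. -/
def IsPPT {a b : Type*} [Fintype a] [Fintype b] (σ : Matrix (a × b) (a × b) ℂ) : Prop :=
  σ.PosSemidef ∧ (ptranspose σ).PosSemidef ∧ σ.trace = 1

/-- `ν_α(X‖σ)`, with the convention that it is `⊤` when `supp(X) ⊄ supp(σ)`. -/
noncomputable def nuAlpha (α : ℝ) (X σ : Matrix n n ℂ) : EReal :=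
  if LinearMap.range (Matrix.toLin' X) ≤ LinearMap.range (Matrix.toLin' σ) then
    ((Real.logb 2 (muAlpha α X σ) : ℝ) : EReal)
  else ⊤

/-- Logarithmic negativity `E_N(ρ) = log₂ ‖T_B(ρ)‖₁`. -/
noncomputable def EN {a b : Type*} [Fintype a] [Fintype b] [DecidableEq a] [DecidableEq b]
    (ρ : Matrix (a × b) (a × b) ℂ) : ℝ :=
  Real.logb 2 (schattenNorm 1 (ptranspose ρ))

/-- `α`-logarithmic negativity `E_N^α(ρ) = inf_{σ ∈ PPT} ν_α(T_B(ρ)‖σ)`. -/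
noncomputable def ENalpha {a b : Type*} [Fintype a] [Fintype b] [DecidableEq a] [DecidableEq b]
    (α : ℝ) (ρ : Matrix (a × b) (a × b) ℂ) : EReal :=
  ⨅ σ : {σ : Matrix (a × b) (a × b) ℂ // IsPPT σ}, nuAlpha α (ptranspose ρ) σ.1


/-!
Fix a PPT state `σ` with `supp T_B(ρ) ⊆ supp σ` and put `d = (α - 1)/(2α)`, so that
`Y = σ^{-d} T_B(ρ) σ^{-d}` satisfies `T_B(ρ) = σ^d Y σ^d` and `μ_α = ‖Y‖_α`. Pairing `T_B(ρ)` with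
its sign and expanding `Y = Σ t_j v_j v_j†` gives `‖T_B(ρ)‖₁ ≤ Σ_j w_j |t_j|`, where
`w_j = ⟨v_j, σ^{2d} v_j⟩`. For the Hölder conjugate `α'` of `α` we have `2d α' = 1`, so Jensen's
inequality for the doubly stochastic matrix `|⟨v_j, u_i⟩|²` gives `Σ_j w_j^{α'} ≤ Tr σ = 1`, and
Hölder's inequality yields `‖T_B(ρ)‖₁ ≤ ‖Y‖_α`. Hence `E_N ≤ E_N^α`: the α-negativity is
nonnegative, and it vanishes only if `‖T_B(ρ)‖₁ = 1`, i.e. `T_B(ρ) ≥ 0`. Conversely, for a PPT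
state the choice `σ = T_B(ρ)` gives `μ_α = ‖σ^{1/α}‖_α = (Tr σ)^{1/α} = 1`.
-/

lemma Real.sign_mul_self_eq_abs (x : ℝ) : Real.sign x * x = |x| := by
  rcases lt_trichotomy x 0 with h | rfl | h
  · rw [Real.sign_of_neg h, abs_of_neg h]; ring
  · simp
  · rw [Real.sign_of_pos h, abs_of_pos h]; ring

lemma Real.abs_sign_le_one (x : ℝ) : |Real.sign x| ≤ 1 := by
  rcases Real.sign_apply_eq x with h | h | h <;> simp [h]

namespace Matrix

variable {A X Y σ : Matrix n n ℂ}

lemma continuousOn_spectrum (f : ℝ → ℝ) (A : Matrix n n ℂ) : ContinuousOn f (spectrum ℝ A) :=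
  A.finite_real_spectrum.continuousOn f

lemma continuousOn_image_spectrum (f g : ℝ → ℝ) (A : Matrix n n ℂ) :
    ContinuousOn f (g '' spectrum ℝ A) :=
  (A.finite_real_spectrum.image g).continuousOn f

lemma isHermitian_cfc (f : ℝ → ℝ) (A : Matrix n n ℂ) : (cfc f A).IsHermitian :=
  cfc_predicate f A

lemma IsHermitian.cfc_eq_conj_diagonal (hA : A.IsHermitian) (f : ℝ → ℝ) :
    cfc f A = (hA.eigenvectorUnitary : Matrix n n ℂ) *
      diagonal (fun i => (f (hA.eigenvalues i) : ℂ)) *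
        star (hA.eigenvectorUnitary : Matrix n n ℂ) := by
  rw [hA.cfc_eq, IsHermitian.cfc, Unitary.conjStarAlgAut_apply]; rfl

lemma IsHermitian.trace_cfc (hA : A.IsHermitian) (f : ℝ → ℝ) :
    (cfc f A).trace = ∑ i, (f (hA.eigenvalues i) : ℂ) := by
  rw [hA.cfc_eq_conj_diagonal, trace_mul_cycle, Unitary.coe_star_mul_self, one_mul,
    trace_diagonal]

lemma IsHermitian.sum_eigenvalues_eq_one (hA : A.IsHermitian) (htr : A.trace = 1) :
    ∑ i, hA.eigenvalues i = 1 := by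
  have h := hA.trace_eq_sum_eigenvalues
  rw [htr] at h
  simpa using congrArg Complex.re h.symm

lemma IsHermitian.schattenNorm_cfc (hA : A.IsHermitian) (f : ℝ → ℝ) (p : ℝ) :
    schattenNorm p (cfc f A) = (∑ i, |f (hA.eigenvalues i)| ^ p) ^ (1 / p) := by
  have hsq : (cfc f A)ᴴ * cfc f A = cfc (fun x => f x * f x) A := by
    rw [(isHermitian_cfc f A).eq,
      cfc_mul f f A (continuousOn_spectrum _ _) (continuousOn_spectrum _ _)]
  have hpow : ∀ x, (f x * f x) ^ (p / 2) = |f x| ^ p := fun x => by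
    rw [← abs_mul_abs_self, ← sq, ← Real.rpow_natCast, ← Real.rpow_mul (abs_nonneg _)]
    norm_num [mul_div_cancel₀]
  rw [schattenNorm, mpow, hsq, ← cfc_comp' (fun x : ℝ => x ^ (p / 2)) (fun x => f x * f x) A
      (continuousOn_image_spectrum _ _ _) (continuousOn_spectrum _ _), hA.trace_cfc]
  simp only [hpow]
  norm_cast

lemma IsHermitian.schattenNorm_eq (hA : A.IsHermitian) (p : ℝ) :
    schattenNorm p A = (∑ i, |hA.eigenvalues i| ^ p) ^ (1 / p) := by
  conv_lhs => rw [← cfc_id' ℝ A hA.isSelfAdjoint]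
  exact hA.schattenNorm_cfc id p

lemma IsHermitian.schattenNorm_one_eq (hA : A.IsHermitian) :
    schattenNorm 1 A = ∑ i, |hA.eigenvalues i| := by
  simp [hA.schattenNorm_eq]

lemma IsHermitian.schattenNorm_one_eq_re_trace_sign (hA : A.IsHermitian) :
    schattenNorm 1 A = (cfc Real.sign A * A).trace.re := by
  have hmul : cfc Real.sign A * A = cfc (fun x => Real.sign x * x) A := by
    rw [cfc_mul Real.sign (fun x => x) A (continuousOn_spectrum _ _) (continuousOn_spectrum _ _),
      cfc_id' ℝ A hA.isSelfAdjoint]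
  rw [hmul, hA.schattenNorm_one_eq, hA.trace_cfc]
  simp only [Real.sign_mul_self_eq_abs]
  norm_cast

lemma IsHermitian.one_le_schattenNorm_one (hX : X.IsHermitian) (htr : X.trace = 1) :
    1 ≤ schattenNorm 1 X := by
  rw [hX.schattenNorm_one_eq, ← hX.sum_eigenvalues_eq_one htr]
  exact Finset.sum_le_sum fun i _ => le_abs_self _

lemma IsHermitian.posSemidef_of_schattenNorm_one_le_one (hX : X.IsHermitian)
    (htr : X.trace = 1) (h : schattenNorm 1 X ≤ 1) : X.PosSemidef := by
  rw [hX.schattenNorm_one_eq, ← hX.sum_eigenvalues_eq_one htr] at h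
  have habs := (Finset.sum_eq_sum_iff_of_le fun i _ => le_abs_self (hX.eigenvalues i)).mp
    (h.antisymm' (Finset.sum_le_sum fun i _ => le_abs_self _))
  exact hX.posSemidef_iff_eigenvalues_nonneg.mpr fun i =>
    abs_eq_self.mp (habs i (Finset.mem_univ i)).symm

lemma isHermitian_mpow (A : Matrix n n ℂ) (r : ℝ) : (mpow A r).IsHermitian :=
  isHermitian_cfc _ A

lemma IsHermitian.mpow_zero (hA : A.IsHermitian) : mpow A 0 = 1 := by
  simp only [mpow, Real.rpow_zero]
  exact cfc_const_one ℝ A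

lemma IsHermitian.mpow_one (hA : A.IsHermitian) : mpow A 1 = A := by
  simp only [mpow, Real.rpow_one]
  exact cfc_id' ℝ A hA.isSelfAdjoint

lemma PosSemidef.nonneg_of_mem_spectrum (hσ : σ.PosSemidef) {x : ℝ} (hx : x ∈ spectrum ℝ σ) :
    0 ≤ x := by
  obtain ⟨i, rfl⟩ := hσ.isHermitian.spectrum_real_eq_range_eigenvalues ▸ hx
  exact hσ.eigenvalues_nonneg i

lemma PosSemidef.mpow_add (hσ : σ.PosSemidef) {r s : ℝ} (h : r + s ≠ 0) :
    mpow σ (r + s) = mpow σ r * mpow σ s := by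
  rw [mpow, mpow, mpow, ← cfc_mul _ _ σ (continuousOn_spectrum _ _) (continuousOn_spectrum _ _)]
  exact cfc_congr fun x hx => Real.rpow_add' (hσ.nonneg_of_mem_spectrum hx) h

/- `σ^{-r} σ^r` is only the support projection of `σ`, because `0 ^ r = 0` for `r ≠ 0`. -/
lemma PosSemidef.mpow_neg_mul_mpow_mul_self (hσ : σ.PosSemidef) (r : ℝ) :
    mpow σ (-r) * mpow σ r * σ = σ := by
  nth_rw 3 4 [← hσ.isHermitian.mpow_one]
  rw [mpow, mpow, mpow, ← cfc_mul _ _ σ (continuousOn_spectrum _ _) (continuousOn_spectrum _ _),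
    ← cfc_mul _ _ σ (continuousOn_spectrum _ _) (continuousOn_spectrum _ _)]
  refine cfc_congr fun x hx => ?_
  rcases (hσ.nonneg_of_mem_spectrum hx).eq_or_lt with rfl | hpos
  · simp
  · rw [← Real.rpow_add hpos, neg_add_cancel, Real.rpow_zero, one_mul]

lemma mul_eq_self_of_range_le {R : Type*} [CommRing R] {Q S Z : Matrix n n R} (hQ : Q * S = S)
    (h : LinearMap.range (toLin' Z) ≤ LinearMap.range (toLin' S)) : Q * Z = Z := by
  refine toLin'.injective (LinearMap.ext fun v => ?_)
  obtain ⟨w, hw⟩ := h (LinearMap.mem_range_self _ v)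
  simp only [toLin'_apply] at hw
  rw [toLin'_apply, toLin'_apply, ← mulVec_mulVec, ← hw, mulVec_mulVec, hQ]

lemma PosSemidef.mpow_neg_conj_mpow_conj (hσ : σ.PosSemidef) (hX : X.IsHermitian)
    (h : LinearMap.range (toLin' X) ≤ LinearMap.range (toLin' σ)) (r : ℝ) :
    mpow σ (-r) * (mpow σ r * X * mpow σ r) * mpow σ (-r) = X := by
  have hleft : mpow σ (-r) * mpow σ r * X = X :=
    mul_eq_self_of_range_le (hσ.mpow_neg_mul_mpow_mul_self r) h
  have hright : X * (mpow σ r * mpow σ (-r)) = X := by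
    simpa [conjTranspose_mul, (isHermitian_mpow σ _).eq, hX.eq, Matrix.mul_assoc]
      using congrArg (fun M => Mᴴ) hleft
  calc mpow σ (-r) * (mpow σ r * X * mpow σ r) * mpow σ (-r)
      = (mpow σ (-r) * mpow σ r * X) * (mpow σ r * mpow σ (-r)) := by
        simp only [Matrix.mul_assoc]
    _ = X := by rw [hleft, hright]

lemma PosSemidef.muAlpha_self (hσ : σ.PosSemidef) (hσtr : σ.trace = 1) {α : ℝ} (hα : 0 < α) :
    muAlpha α σ σ = 1 := by
  set r := (1 - α) / (2 * α)
  have hconj : mpow σ r * σ * mpow σ r = mpow σ (1 / α) := by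
    have hr1 : r + 1 = (1 + α) / (2 * α) := by simp only [r]; field_simp; ring
    have hrr : r + 1 + r = 1 / α := by simp only [r]; field_simp; ring
    rw [← hrr, hσ.mpow_add (by rw [hrr]; positivity), hσ.mpow_add (by rw [hr1]; positivity),
      hσ.isHermitian.mpow_one]
  have hterm : ∀ i,
      |hσ.isHermitian.eigenvalues i ^ (1 / α)| ^ α = hσ.isHermitian.eigenvalues i := fun i => by
    rw [abs_of_nonneg (Real.rpow_nonneg (hσ.eigenvalues_nonneg i) _),
      ← Real.rpow_mul (hσ.eigenvalues_nonneg i), one_div_mul_cancel hα.ne', Real.rpow_one]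
  rw [muAlpha, hconj, mpow, hσ.isHermitian.schattenNorm_cfc]
  simp only [hterm, hσ.isHermitian.sum_eigenvalues_eq_one hσtr, Real.one_rpow]

lemma re_conjTranspose_mul_self_apply {m : Type*} [Fintype m] (M : Matrix m m ℂ) (j : m) :
    ((Mᴴ * M) j j).re = ∑ i, ‖M i j‖ ^ 2 := by
  simp only [mul_apply, conjTranspose_apply, RCLike.star_def, Complex.conj_mul', Complex.re_sum]
  norm_cast

lemma re_mul_conjTranspose_self_apply {m : Type*} [Fintype m] (M : Matrix m m ℂ) (j : m) :
    ((M * Mᴴ) j j).re = ∑ i, ‖M j i‖ ^ 2 := by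
  simpa using re_conjTranspose_mul_self_apply Mᴴ j

lemma IsHermitian.norm_conjTranspose_mul_cfc_mul_apply_le (hA : A.IsHermitian) {f : ℝ → ℝ}
    (hf : ∀ x, |f x| ≤ 1) (M : Matrix n n ℂ) (j : n) :
    ‖(Mᴴ * cfc f A * M) j j‖ ≤ ((Mᴴ * M) j j).re := by
  set U : Matrix n n ℂ := ↑hA.eigenvectorUnitary
  set N := star U * M
  have hconj : Mᴴ * cfc f A * M = Nᴴ * diagonal (fun k => (f (hA.eigenvalues k) : ℂ)) * N := by
    simp only [hA.cfc_eq_conj_diagonal, N, U, conjTranspose_mul, star_eq_conjTranspose,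
      conjTranspose_conjTranspose, Matrix.mul_assoc]
  have hnorm : Mᴴ * M = Nᴴ * N := by
    rw [show Nᴴ * N = Mᴴ * (U * star U) * M by
        simp only [N, conjTranspose_mul, star_eq_conjTranspose, conjTranspose_conjTranspose,
          Matrix.mul_assoc],
      Unitary.mul_star_self_of_mem hA.eigenvectorUnitary.2, Matrix.mul_one]
  rw [hconj, hnorm, re_conjTranspose_mul_self_apply, mul_apply]
  simp only [mul_diagonal, conjTranspose_apply]
  refine (norm_sum_le _ _).trans (Finset.sum_le_sum fun k _ => ?_)
  rw [norm_mul, norm_mul, norm_star, Complex.norm_real, Real.norm_eq_abs, sq]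
  exact mul_le_mul_of_nonneg_right (mul_le_of_le_one_right (norm_nonneg _) (hf _)) (norm_nonneg _)

lemma IsHermitian.schattenNorm_one_mul_mul_conjTranspose_le (hY : Y.IsHermitian)
    (P : Matrix n n ℂ) :
    schattenNorm 1 (P * Y * Pᴴ) ≤ ∑ j,
      (((P * (hY.eigenvectorUnitary : Matrix n n ℂ))ᴴ *
        (P * (hY.eigenvectorUnitary : Matrix n n ℂ))) j j).re * |hY.eigenvalues j| := by
  set V : Matrix n n ℂ := ↑hY.eigenvectorUnitary
  set S := cfc Real.sign (P * Y * Pᴴ)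
  have hX : (P * Y * Pᴴ).IsHermitian := isHermitian_mul_mul_conjTranspose P hY
  have htrace : (S * (P * Y * Pᴴ)).trace =
      ∑ j, ((P * V)ᴴ * S * (P * V)) j j * (hY.eigenvalues j : ℂ) := by
    have hYV : Y = V * diagonal (fun j => (hY.eigenvalues j : ℂ)) * Vᴴ :=
      (cfc_id ℝ Y hY.isSelfAdjoint).symm.trans (hY.cfc_eq_conj_diagonal id)
    conv_lhs => rw [hYV]
    rw [show S * (P * (V * diagonal (fun j => (hY.eigenvalues j : ℂ)) * Vᴴ) * Pᴴ) =
        (S * (P * V) * diagonal (fun j => (hY.eigenvalues j : ℂ))) * (P * V)ᴴ by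
          simp only [conjTranspose_mul, Matrix.mul_assoc],
      trace_mul_comm, ← Matrix.mul_assoc, ← Matrix.mul_assoc, trace]
    simp only [diag, mul_diagonal, Matrix.mul_assoc]
  rw [hX.schattenNorm_one_eq_re_trace_sign, htrace, Complex.re_sum]
  refine Finset.sum_le_sum fun j _ => ?_
  set a := ((P * V)ᴴ * S * (P * V)) j j
  rw [Complex.re_mul_ofReal]
  calc a.re * hY.eigenvalues j ≤ ‖a‖ * |hY.eigenvalues j| := by
        refine (le_abs_self _).trans ?_
        rw [abs_mul]
        exact mul_le_mul_of_nonneg_right (Complex.abs_re_le_norm a) (abs_nonneg _)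
    _ ≤ _ := mul_le_mul_of_nonneg_right
        (hX.norm_conjTranspose_mul_cfc_mul_apply_le Real.abs_sign_le_one _ j) (abs_nonneg _)

lemma sum_re_conj_diagonal_apply_rpow_le {W : Matrix n n ℂ} (hW : W ∈ unitaryGroup n ℂ)
    {d : n → ℝ} (hd : ∀ i, 0 ≤ d i) {q : ℝ} (hq : 1 ≤ q) :
    ∑ j, ((W * diagonal (fun i => (d i : ℂ)) * star W) j j).re ^ q ≤ ∑ i, d i ^ q := by
  have hentry : ∀ j, ((W * diagonal (fun i => (d i : ℂ)) * star W) j j).re =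
      ∑ i, ‖W j i‖ ^ 2 * d i := fun j => by
    rw [mul_apply, Complex.re_sum]
    simp only [mul_diagonal, star_apply, RCLike.star_def]
    refine Finset.sum_congr rfl fun i _ => ?_
    rw [mul_right_comm, Complex.mul_conj', ← Complex.ofReal_pow, ← Complex.ofReal_mul,
      Complex.ofReal_re]
  have hrow : ∀ j, ∑ i, ‖W j i‖ ^ 2 = 1 := fun j => by
    rw [← re_mul_conjTranspose_self_apply, ← star_eq_conjTranspose,
      mem_unitaryGroup_iff.mp hW, one_apply_eq, Complex.one_re]
  have hcol : ∀ i, ∑ j, ‖W j i‖ ^ 2 = 1 := fun i => by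
    rw [← re_conjTranspose_mul_self_apply, ← star_eq_conjTranspose,
      mem_unitaryGroup_iff'.mp hW, one_apply_eq, Complex.one_re]
  calc ∑ j, ((W * diagonal (fun i => (d i : ℂ)) * star W) j j).re ^ q
      ≤ ∑ j, ∑ i, ‖W j i‖ ^ 2 * d i ^ q := Finset.sum_le_sum fun j _ => by
        rw [hentry]
        exact Real.rpow_arith_mean_le_arith_mean_rpow _ _ _ (fun i _ => by positivity) (hrow j)
          (fun i _ => hd i) hq
    _ = ∑ i, d i ^ q := by
        rw [Finset.sum_comm]
        simp only [← Finset.sum_mul, hcol, one_mul]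

lemma PosSemidef.sum_re_conj_mpow_apply_rpow_le {V : Matrix n n ℂ} (hσ : σ.PosSemidef)
    (hV : V ∈ unitaryGroup n ℂ) (r : ℝ) {q : ℝ} (hq : 1 ≤ q) :
    ∑ j, ((star V * mpow σ r * V) j j).re ^ q ≤ (mpow σ (r * q)).trace.re := by
  set U : Matrix n n ℂ := ↑hσ.isHermitian.eigenvectorUnitary
  have hW : star V * U ∈ unitaryGroup n ℂ :=
    Submonoid.mul_mem _ (Unitary.star_mem hV) hσ.isHermitian.eigenvectorUnitary.2
  have hconj : star V * mpow σ r * V = (star V * U) *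
      diagonal (fun i => ((hσ.isHermitian.eigenvalues i ^ r : ℝ) : ℂ)) * star (star V * U) := by
    rw [mpow, hσ.isHermitian.cfc_eq_conj_diagonal, star_mul, star_star]
    simp only [U, Matrix.mul_assoc]
  rw [hconj, mpow, hσ.isHermitian.trace_cfc, Complex.re_sum]
  refine (sum_re_conj_diagonal_apply_rpow_le hW (fun i => ?_) hq).trans_eq ?_
  · exact Real.rpow_nonneg (hσ.eigenvalues_nonneg i) r
  · refine Finset.sum_congr rfl fun i _ => ?_
    rw [← Real.rpow_mul (hσ.eigenvalues_nonneg i), Complex.ofReal_re]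

lemma schattenNorm_one_le_muAlpha_of_one_lt (hX : X.IsHermitian) (hσ : σ.PosSemidef)
    (hσtr : σ.trace = 1) (h : LinearMap.range (toLin' X) ≤ LinearMap.range (toLin' σ))
    {α : ℝ} (hα : 1 < α) : schattenNorm 1 X ≤ muAlpha α X σ := by
  set d := (α - 1) / (2 * α)
  set q := α.conjExponent
  have hpq : q.HolderConjugate α := (Real.HolderConjugate.conjExponent hα).symm
  set P := mpow σ d
  set Y := mpow σ (-d) * X * mpow σ (-d)
  have hY : Y.IsHermitian := by
    simpa [(isHermitian_mpow σ (-d)).eq] using isHermitian_mul_mul_conjTranspose (mpow σ (-d)) hX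
  have hXY : X = P * Y * Pᴴ := by
    rw [(isHermitian_mpow σ d).eq]
    simpa using (hσ.mpow_neg_conj_mpow_conj hX h (-d)).symm
  set V : Matrix n n ℂ := ↑hY.eigenvectorUnitary
  set w := fun j => (((P * V)ᴴ * (P * V)) j j).re
  have hw_nonneg : ∀ j, 0 ≤ w j := fun j => by
    simp only [w, re_conjTranspose_mul_self_apply]; positivity
  have hw : ∑ j, w j ^ q ≤ 1 := by
    have hPP : (P * V)ᴴ * (P * V) = star V * mpow σ (d + d) * V := by
      rw [hσ.mpow_add (by positivity), conjTranspose_mul, (isHermitian_mpow σ d).eq]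
      simp only [P, star_eq_conjTranspose, Matrix.mul_assoc]
    have hexp : (d + d) * q = 1 := by
      have : α - 1 ≠ 0 := by linarith
      simp only [d, q, Real.conjExponent]
      field_simp
      ring
    calc ∑ j, w j ^ q = ∑ j, ((star V * mpow σ (d + d) * V) j j).re ^ q := by simp only [w, hPP]
      _ ≤ (mpow σ ((d + d) * q)).trace.re :=
        hσ.sum_re_conj_mpow_apply_rpow_le hY.eigenvectorUnitary.2 (d + d) hpq.lt.le
      _ = 1 := by rw [hexp, hσ.isHermitian.mpow_one, hσtr, Complex.one_re]
  have hμ : muAlpha α X σ = (∑ j, |hY.eigenvalues j| ^ α) ^ (1 / α) := by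
    rw [muAlpha, show (1 - α) / (2 * α) = -d by ring, ← hY.schattenNorm_eq]
  calc schattenNorm 1 X
      ≤ ∑ j, w j * |hY.eigenvalues j| := hXY ▸ hY.schattenNorm_one_mul_mul_conjTranspose_le P
    _ ≤ (∑ j, w j ^ q) ^ (1 / q) * (∑ j, |hY.eigenvalues j| ^ α) ^ (1 / α) :=
        Real.inner_le_Lp_mul_Lq_of_nonneg _ hpq (fun j _ => hw_nonneg j) (fun j _ => abs_nonneg _)
    _ ≤ 1 * (∑ j, |hY.eigenvalues j| ^ α) ^ (1 / α) := by
        gcongr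
        exact Real.rpow_le_one (Finset.sum_nonneg fun j _ => Real.rpow_nonneg (hw_nonneg j) _) hw
          (one_div_nonneg.mpr hpq.nonneg)
    _ = muAlpha α X σ := by rw [one_mul, hμ]

lemma schattenNorm_one_le_muAlpha (hX : X.IsHermitian) (hσ : σ.PosSemidef) (hσtr : σ.trace = 1)
    (h : LinearMap.range (toLin' X) ≤ LinearMap.range (toLin' σ)) {α : ℝ} (hα : 1 ≤ α) :
    schattenNorm 1 X ≤ muAlpha α X σ := by
  rcases hα.eq_or_lt with rfl | hα
  · simp [muAlpha, hσ.isHermitian.mpow_zero]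
  · exact schattenNorm_one_le_muAlpha_of_one_lt hX hσ hσtr h hα

end Matrix

lemma Matrix.IsHermitian.ptranspose {a b : Type*} {ρ : Matrix (a × b) (a × b) ℂ}
    (hρ : ρ.IsHermitian) : (ptranspose ρ).IsHermitian :=
  Matrix.ext fun x y => hρ.apply (x.1, y.2) (y.1, x.2)

section LogarithmicNegativity

variable {a b : Type*} [Fintype a] [Fintype b]

lemma trace_ptranspose (ρ : Matrix (a × b) (a × b) ℂ) : (ptranspose ρ).trace = ρ.trace := by
  simp [ptranspose, Matrix.trace, Matrix.diag]

variable [DecidableEq a] [DecidableEq b] {ρ : Matrix (a × b) (a × b) ℂ}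

lemma one_le_schattenNorm_one_ptranspose (hρ : ρ.IsHermitian) (hρtr : ρ.trace = 1) :
    1 ≤ schattenNorm 1 (ptranspose ρ) :=
  hρ.ptranspose.one_le_schattenNorm_one ((trace_ptranspose ρ).trans hρtr)

lemma EN_nonneg (hρ : ρ.IsHermitian) (hρtr : ρ.trace = 1) : 0 ≤ EN ρ :=
  Real.logb_nonneg one_lt_two (one_le_schattenNorm_one_ptranspose hρ hρtr)

lemma isPPT_of_EN_nonpos (hρ : ρ.PosSemidef) (hρtr : ρ.trace = 1) (h : EN ρ ≤ 0) : IsPPT ρ := by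
  refine ⟨hρ, hρ.isHermitian.ptranspose.posSemidef_of_schattenNorm_one_le_one
    ((trace_ptranspose ρ).trans hρtr) ?_, hρtr⟩
  exact (Real.logb_nonpos_iff one_lt_two
    (zero_lt_one.trans_le (one_le_schattenNorm_one_ptranspose hρ.isHermitian hρtr))).mp h

lemma EN_le_ENalpha (hρ : ρ.IsHermitian) (hρtr : ρ.trace = 1) {α : ℝ} (hα : 1 ≤ α) :
    (EN ρ : EReal) ≤ ENalpha α ρ := by
  refine le_iInf fun ⟨σ, hσ, _, hσtr⟩ => ?_
  unfold nuAlpha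
  split_ifs with hrange
  · exact EReal.coe_le_coe_iff.mpr <| Real.logb_le_logb_of_le one_lt_two
      (zero_lt_one.trans_le (one_le_schattenNorm_one_ptranspose hρ hρtr))
      (Matrix.schattenNorm_one_le_muAlpha hρ.ptranspose hσ hσtr hrange hα)
  · exact le_top

lemma ENalpha_nonpos_of_isPPT (hρ : IsPPT ρ) {α : ℝ} (hα : 0 < α) : ENalpha α ρ ≤ 0 := by
  obtain ⟨hρpsd, hTpsd, hρtr⟩ := hρ
  have hTtr : (ptranspose ρ).trace = 1 := (trace_ptranspose ρ).trans hρtr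
  refine (iInf_le _ ⟨ptranspose ρ, hTpsd, hρpsd, hTtr⟩).trans_eq ?_
  simp [nuAlpha, hTpsd.muAlpha_self hTtr hα]

end LogarithmicNegativity

/-- faithfulness: `E_N^α(ρ) ≥ 0`, with equality iff `ρ` is PPT. -/
theorem ENalpha_faithful {a b : Type*}
    [Fintype a] [Fintype b] [DecidableEq a] [DecidableEq b]
    (ρ : Matrix (a × b) (a × b) ℂ) (hρ : ρ.PosSemidef) (hρtr : ρ.trace = 1)
    (α : ℝ) (hα : 1 ≤ α) :
    (0 : EReal) ≤ ENalpha α ρ ∧ (ENalpha α ρ = 0 ↔ IsPPT ρ) := by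
  have hEN : (EN ρ : EReal) ≤ ENalpha α ρ := EN_le_ENalpha hρ.isHermitian hρtr hα
  have hnonneg : 0 ≤ ENalpha α ρ :=
    (EReal.coe_nonneg.mpr (EN_nonneg hρ.isHermitian hρtr)).trans hEN
  refine ⟨hnonneg, fun hzero => isPPT_of_EN_nonpos hρ hρtr ?_, fun hppt =>
    (ENalpha_nonpos_of_isPPT hppt (zero_lt_one.trans_le hα)).antisymm hnonneg⟩
  exact EReal.coe_nonpos.mp (hzero ▸ hEN)
end
end
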